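/- arXiv:1812.05844 — 2 statements merged into one kernel-verified Lean document; each statement's English description precedes it below -/
import Mathlib

section
/- Let ε > 0 and let p₁, ..., p_m be the first m odd primes with Q = p₁⋯p_m. Define S(Q) as the set of pairs (a, q) of positive integers with Q < q ≤ 2Q, 1 ≤ a ≤ q², gcd(a, q) = 1, and |a/q² − 1/Q| ≤ 1/Q³. Then for all sufficiently large m, the cardinality of S(Q) is at least Q^{(log 2)/((1+ε) log log Q)}. -/
open scoped Classical

/-- The `i`-th odd prime (0-indexed): `nthOddPrime 0 = 3`, etc. -/
noncomputable def nthOddPrime (i : ℕ) : ℕ := Nat.nth (fun p => p.Prime ∧ p ≠ 2) i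

/-!
Every square root `x` of `1` modulo `Q` gives a denominator `q = Q + x` in `(Q, 2Q]` with
`q² = a Q + 1`, and then `a / q² = 1 / Q - 1 / (q² Q)` lies within `1 / Q³` of `1 / Q`. By the
Chinese remainder theorem there are `2^m` such roots, so `#S(Q) ≥ 2^m`.

It remains to show `log Q ≤ (1 + ε) m log log Q`. Here `Q ≤ P^m` for the largest prime
factor `P` of `Q`, the `(m + 1)`-st prime. Chebyshev's bound
`π(P) ≥ (P log 2 - log (P + 1)) / log P`, read against `π(P) = m + 1`, forces
`P^(1/(1+ε)) < m` for large `m`; and `Q ≥ 3^m ≥ e^m` gives `log m ≤ log log Q`.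
-/

open Real Filter Asymptotics

/-- The set `S(Q)`. -/
noncomputable def fareySquareNear (Q : ℕ) : Finset (ℕ × ℕ) :=
  ((Finset.Icc 1 ((2 * Q) ^ 2)) ×ˢ (Finset.Ioc Q (2 * Q))).filter
    (fun p : ℕ × ℕ => p.1 ≤ p.2 ^ 2 ∧ Nat.gcd p.1 p.2 = 1 ∧
      |(p.1 : ℝ) / (p.2 : ℝ) ^ 2 - 1 / (Q : ℝ)| ≤ 1 / (Q : ℝ) ^ 3)

lemma abs_div_sq_sub_inv_le {Q a q : ℕ} (hQ : 0 < Q) (hq : Q ≤ q) (h : a * Q + 1 = q ^ 2) :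
    |(a : ℝ) / (q : ℝ) ^ 2 - 1 / (Q : ℝ)| ≤ 1 / (Q : ℝ) ^ 3 := by
  have hQR : (0 : ℝ) < Q := by exact_mod_cast hQ
  have hqR : (Q : ℝ) ≤ q := by exact_mod_cast hq
  have hq0 : (0 : ℝ) < q := hQR.trans_le hqR
  have hR : (a : ℝ) * Q + 1 = (q : ℝ) ^ 2 := by exact_mod_cast h
  have hdiff : (a : ℝ) / (q : ℝ) ^ 2 - 1 / (Q : ℝ) = -(1 / ((q : ℝ) ^ 2 * Q)) := by
    field_simp
    linarith
  rw [hdiff, abs_neg, abs_of_pos (by positivity)]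
  gcongr
  rw [pow_succ]
  gcongr

lemma mk_mem_fareySquareNear {Q a q : ℕ} (hQ : 0 < Q) (hQq : Q < q) (hq : q ≤ 2 * Q)
    (h : a * Q + 1 = q ^ 2) : (a, q) ∈ fareySquareNear Q := by
  have ha : 1 ≤ a := by
    rcases Nat.eq_zero_or_pos a with rfl | ha
    · nlinarith
    · exact ha
  have hcop : Nat.Coprime a q := by
    refine Nat.Coprime.coprime_dvd_right (dvd_pow_self q two_ne_zero) ?_
    rw [← h, add_comm, Nat.coprime_add_mul_left_right]
    exact Nat.coprime_one_right a
  simp only [fareySquareNear, Finset.mem_filter, Finset.mem_product, Finset.mem_Icc,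
    Finset.mem_Ioc]
  refine ⟨⟨⟨ha, ?_⟩, hQq, hq⟩, by nlinarith, hcop, abs_div_sq_sub_inv_le hQ hQq.le h⟩
  calc a ≤ q ^ 2 := by nlinarith
    _ ≤ (2 * Q) ^ 2 := by gcongr

lemma exists_mul_add_one_eq_sq {Q : ℕ} [NeZero Q] {x : ZMod Q} (hx : x ^ 2 = 1) :
    ∃ a, a * Q + 1 = (x.val + Q) ^ 2 := by
  have hsq : 1 ≤ (x.val + Q) ^ 2 := Nat.one_le_pow _ _ (by have := NeZero.pos Q; omega)
  obtain ⟨a, ha⟩ : Q ∣ (x.val + Q) ^ 2 - 1 := by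
    rw [← ZMod.natCast_eq_zero_iff, Nat.cast_sub hsq]
    simp [hx]
  exact ⟨a, by rw [mul_comm]; omega⟩

lemma card_sq_eq_one_le_card_fareySquareNear {Q : ℕ} (hQ : 1 < Q) :
    Nat.card {x : ZMod Q // x ^ 2 = 1} ≤ (fareySquareNear Q).card := by
  have : NeZero Q := ⟨by omega⟩
  have : Fact (1 < Q) := ⟨hQ⟩
  choose a ha using fun x : {x : ZMod Q // x ^ 2 = 1} => exists_mul_add_one_eq_sq x.2
  rw [← Nat.card_eq_finsetCard]
  refine Nat.card_le_card_of_injective (fun x => ⟨(a x, x.1.val + Q), ?_⟩) ?_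
  · have hx0 : x.1 ≠ 0 := by
      intro h0
      simpa [h0] using x.2
    have := ZMod.val_pos.2 hx0
    exact mk_mem_fareySquareNear (by omega) (by omega) (by linarith [ZMod.val_lt x.1]) (ha x)
  · intro x y hxy
    have : x.1.val + Q = y.1.val + Q := congrArg (fun p => p.1.2) hxy
    exact Subtype.ext (ZMod.val_injective Q (by omega))

lemma card_sq_eq_one_mul {a b : ℕ} (h : a.Coprime b) :
    Nat.card {x : ZMod (a * b) // x ^ 2 = 1} =
      Nat.card {x : ZMod a // x ^ 2 = 1} * Nat.card {x : ZMod b // x ^ 2 = 1} := by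
  have e : {x : ZMod (a * b) // x ^ 2 = 1} ≃ {y : ZMod a × ZMod b // y ^ 2 = 1} :=
    (ZMod.chineseRemainder h).toEquiv.subtypeEquiv fun x => by simp [← map_pow]
  rw [Nat.card_congr e, ← Nat.card_prod]
  exact Nat.card_congr <| (Equiv.subtypeEquivRight fun _ => Prod.ext_iff).trans
    (Equiv.subtypeProdEquivProd (p := fun x : ZMod a => x ^ 2 = 1)
      (q := fun x : ZMod b => x ^ 2 = 1))

lemma card_sq_eq_one_prime {p : ℕ} (hp : p.Prime) (hp2 : p ≠ 2) :
    Nat.card {x : ZMod p // x ^ 2 = 1} = 2 := by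
  have : Fact p.Prime := ⟨hp⟩
  have : Fact (2 < p) := ⟨by have := hp.two_le; omega⟩
  have hroots : Finset.univ.filter (fun x : ZMod p => x ^ 2 = 1) = {1, -1} := by
    ext x
    simp [sq_eq_one_iff]
  rw [Nat.card_eq_fintype_card, Fintype.card_subtype, hroots,
    Finset.card_pair ZMod.neg_one_ne_one.symm]

lemma card_sq_eq_one_prod {ι : Type*} {s : Finset ι} {p : ι → ℕ}
    (hp : ∀ i ∈ s, (p i).Prime ∧ p i ≠ 2) (hinj : Set.InjOn p s) :
    Nat.card {x : ZMod (∏ i ∈ s, p i) // x ^ 2 = 1} = 2 ^ s.card := by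
  induction s using Finset.induction_on with
  | empty =>
    rw [Finset.prod_empty, Finset.card_empty, pow_zero, Nat.card_eq_one_iff_unique]
    exact ⟨inferInstance, ⟨⟨1, one_pow 2⟩⟩⟩
  | insert i s his ih =>
    have hi := hp i (Finset.mem_insert_self i s)
    have hcop : (p i).Coprime (∏ j ∈ s, p j) := Nat.Coprime.prod_right fun j hj =>
      (Nat.coprime_primes hi.1 (hp j (Finset.mem_insert_of_mem hj)).1).2 fun hij =>
        his (hinj (Finset.mem_insert_self i s) (Finset.mem_insert_of_mem hj) hij ▸ hj)
    rw [Finset.prod_insert his, card_sq_eq_one_mul hcop, card_sq_eq_one_prime hi.1 hi.2,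
      ih (fun j hj => hp j (Finset.mem_insert_of_mem hj))
        (hinj.mono (Finset.coe_subset.2 (Finset.subset_insert i s))),
      Finset.card_insert_of_notMem his, pow_succ']

lemma count_prime_eq_count_oddPrime_add_one {n : ℕ} (hn : 3 ≤ n) :
    Nat.count Nat.Prime n = Nat.count (fun p => p.Prime ∧ p ≠ 2) n + 1 := by
  induction n, hn using Nat.le_induction with
  | base => decide
  | succ n hn ih =>
    rw [Nat.count_succ, Nat.count_succ, ih]
    simp [show n ≠ 2 by omega, add_right_comm]

lemma nthOddPrime_eq_nth_prime_succ (i : ℕ) : nthOddPrime i = Nat.nth Nat.Prime (i + 1) := by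
  have h3 : 3 ≤ Nat.nth Nat.Prime (i + 1) := Nat.nth_prime_one_eq_three ▸
    Nat.nth_monotone Nat.infinite_setOfPred_prime (by omega)
  have hcount : Nat.count (fun p => p.Prime ∧ p ≠ 2) (Nat.nth Nat.Prime (i + 1)) = i := by
    have := count_prime_eq_count_oddPrime_add_one h3
    rw [Nat.count_nth_of_infinite Nat.infinite_setOfPred_prime] at this
    omega
  have := Nat.nth_count (p := fun p => p.Prime ∧ p ≠ 2)
    ⟨Nat.prime_nth_prime (i + 1), by omega⟩
  rwa [hcount] at this

lemma eventually_rpow_add_one_mul_log_add_log_lt {θ : ℝ} (hθ : θ < 1) :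
    ∀ᶠ x : ℝ in atTop, (x ^ θ + 1) * log x + log (x + 1) < x * log 2 := by
  have hpow : (fun x : ℝ => x ^ θ * log x) =o[atTop] id := by
    refine ((isBigO_refl (fun x : ℝ => x ^ θ) atTop).mul_isLittleO
      (isLittleO_log_rpow_atTop (sub_pos.2 hθ))).congr' EventuallyEq.rfl ?_
    filter_upwards [eventually_gt_atTop 0] with x hx
    rw [← rpow_add hx, add_sub_cancel, rpow_one, id]
  have hshift : (fun x : ℝ => log (x + 1)) =o[atTop] id :=
    (isLittleO_log_id_atTop.comp_tendsto (tendsto_atTop_add_const_right _ 1 tendsto_id))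
      |>.trans_isBigO ((isBigO_refl _ _).add (isLittleO_const_id_atTop 1).isBigO)
  have hsum : (fun x : ℝ => (x ^ θ + 1) * log x + log (x + 1)) =o[atTop] id := by
    simpa only [add_mul, one_mul] using (hpow.add isLittleO_log_id_atTop).add hshift
  filter_upwards [hsum.def (half_pos (log_pos one_lt_two)), eventually_gt_atTop 0]
    with x hx hx0
  rw [norm_eq_abs, id, norm_of_nonneg hx0.le] at hx
  nlinarith [le_abs_self ((x ^ θ + 1) * log x + log (x + 1)), log_pos one_lt_two]

lemma primeCounting_nth_prime (n : ℕ) : Nat.primeCounting (Nat.nth Nat.Prime n) = n + 1 := by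
  rw [Nat.primeCounting, Nat.primeCounting', Nat.count_succ, ← Nat.primeCounting',
    Nat.primeCounting'_nth_eq, if_pos (Nat.prime_nth_prime n)]

lemma eventually_log_nth_prime_le {δ : ℝ} (hδ : 0 < δ) :
    ∀ᶠ n : ℕ in atTop, log (Nat.nth Nat.Prime n) ≤ (1 + δ) * log n := by
  have hθ : (1 + δ)⁻¹ < 1 := inv_lt_one_of_one_lt₀ (by linarith)
  have hP : Tendsto (fun n : ℕ => (Nat.nth Nat.Prime n : ℝ)) atTop atTop :=
    tendsto_natCast_atTop_atTop.comp
      (Nat.nth_strictMono Nat.infinite_setOfPred_prime).tendsto_atTop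
  filter_upwards [hP.eventually (eventually_rpow_add_one_mul_log_add_log_lt hθ)] with n hn
  set P := Nat.nth Nat.Prime n
  have hP1 : (1 : ℝ) < P := by exact_mod_cast (Nat.prime_nth_prime n).one_lt
  have hlogP : 0 < log P := log_pos hP1
  have hcheb := Chebyshev.pi_ge P
  rw [primeCounting_nth_prime, div_le_iff₀ hlogP] at hcheb
  push_cast at hcheb
  have hlt : (P : ℝ) ^ (1 + δ)⁻¹ < n := by nlinarith
  have hlog := log_lt_log (by positivity) hlt
  rw [log_rpow (by linarith)] at hlog
  have : log P = (1 + δ) * ((1 + δ)⁻¹ * log P) := by field_simp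
  rw [this]
  exact mul_le_mul_of_nonneg_left hlog.le (by linarith)

lemma prod_nthOddPrime_le_pow (m : ℕ) :
    ∏ i ∈ Finset.range m, nthOddPrime i ≤ Nat.nth Nat.Prime m ^ m := by
  simpa using Finset.prod_le_pow_card (Finset.range m) nthOddPrime _ fun i hi => by
    rw [nthOddPrime_eq_nth_prime_succ]
    exact Nat.nth_monotone Nat.infinite_setOfPred_prime (Finset.mem_range.1 hi)

lemma three_pow_le_prod_nthOddPrime (m : ℕ) :
    3 ^ m ≤ ∏ i ∈ Finset.range m, nthOddPrime i := by
  simpa using Finset.pow_card_le_prod (Finset.range m) nthOddPrime 3 fun i _ => by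
    rw [nthOddPrime_eq_nth_prime_succ, ← Nat.nth_prime_one_eq_three]
    exact Nat.nth_monotone Nat.infinite_setOfPred_prime (by omega)

lemma card_sq_eq_one_prod_nthOddPrime (m : ℕ) :
    Nat.card {x : ZMod (∏ i ∈ Finset.range m, nthOddPrime i) // x ^ 2 = 1} = 2 ^ m := by
  rw [card_sq_eq_one_prod, Finset.card_range]
  · intro i _
    rw [nthOddPrime_eq_nth_prime_succ]
    refine ⟨Nat.prime_nth_prime _, fun h => ?_⟩
    rw [← Nat.nth_prime_zero_eq_two] at h
    exact Nat.succ_ne_zero i (Nat.nth_injective Nat.infinite_setOfPred_prime h)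
  · intro i _ j _ hij
    simpa [nthOddPrime_eq_nth_prime_succ,
      (Nat.nth_injective Nat.infinite_setOfPred_prime).eq_iff] using hij

lemma log_prod_nthOddPrime_le (m : ℕ) :
    log (∏ i ∈ Finset.range m, nthOddPrime i : ℕ) ≤ m * log (Nat.nth Nat.Prime m) := by
  rw [← log_pow]
  exact log_le_log (by exact_mod_cast Finset.prod_pos fun i _ =>
      (nthOddPrime_eq_nth_prime_succ i ▸ Nat.prime_nth_prime (i + 1)).pos)
    (by exact_mod_cast prod_nthOddPrime_le_pow m)

lemma natCast_le_log_prod_nthOddPrime (m : ℕ) :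
    (m : ℝ) ≤ log (∏ i ∈ Finset.range m, nthOddPrime i : ℕ) := by
  have hlog3 : 1 ≤ log 3 := by
    rw [le_log_iff_exp_le (by norm_num)]
    exact exp_one_lt_three.le
  calc (m : ℝ) ≤ m * log 3 := by nlinarith
    _ = log ((3 : ℝ) ^ m) := (log_pow _ _).symm
    _ ≤ _ := log_le_log (by positivity) (by exact_mod_cast three_pow_le_prod_nthOddPrime m)

lemma rpow_log_two_div_le_two_pow {Q c : ℝ} {m : ℕ} (hQ : 0 < Q) (hc : 0 < c)
    (h : log Q ≤ c * m) : Q ^ (log 2 / c) ≤ 2 ^ m := by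
  rw [rpow_def_of_pos hQ, ← rpow_natCast, rpow_def_of_pos two_pos, mul_div_assoc', mul_comm,
    mul_div_assoc]
  gcongr
  rwa [div_le_iff₀ hc, mul_comm]

theorem farey_count_lower_bound (ε : ℝ) (hε : 0 < ε) :
    ∃ m₀ : ℕ, ∀ m : ℕ, m₀ ≤ m → ∀ Q : ℕ, Q = ∏ i ∈ Finset.range m, nthOddPrime i →
      ((((Finset.Icc 1 ((2 * Q) ^ 2)) ×ˢ (Finset.Ioc Q (2 * Q))).filter
          (fun p : ℕ × ℕ => p.1 ≤ p.2 ^ 2 ∧ Nat.gcd p.1 p.2 = 1 ∧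
            |(p.1 : ℝ) / (p.2 : ℝ) ^ 2 - 1 / (Q : ℝ)| ≤ 1 / (Q : ℝ) ^ 3)).card : ℝ) ≥
        (Q : ℝ) ^ (Real.log 2 / ((1 + ε) * Real.log (Real.log Q))) := by
  obtain ⟨m₀, hm₀⟩ := eventually_atTop.1
    ((eventually_log_nth_prime_le hε).and (eventually_ge_atTop 2))
  refine ⟨m₀, fun m hm Q hQ => ?_⟩
  obtain ⟨hlogP, hm2⟩ := hm₀ m hm
  have hQ1 : 1 < Q := hQ ▸
    (Nat.one_lt_pow (by omega) (by norm_num)).trans_le (three_pow_le_prod_nthOddPrime m)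
  have hcard : 2 ^ m ≤ (fareySquareNear Q).card := by
    rw [← card_sq_eq_one_prod_nthOddPrime m, ← hQ]
    exact card_sq_eq_one_le_card_fareySquareNear hQ1
  have hloglog : log m ≤ log (log Q) :=
    log_le_log (by positivity) (hQ ▸ natCast_le_log_prod_nthOddPrime m)
  have hlogQ : log Q ≤ (1 + ε) * log (log Q) * m := calc
    log Q ≤ m * log (Nat.nth Nat.Prime m) := hQ ▸ log_prod_nthOddPrime_le m
    _ ≤ m * ((1 + ε) * log (log Q)) := by gcongr; exact hlogP.trans (by gcongr)
    _ = (1 + ε) * log (log Q) * m := by ring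
  have hc : 0 < (1 + ε) * log (log Q) :=
    mul_pos (by linarith) ((log_pos (by exact_mod_cast hm2)).trans_le hloglog)
  have hcardR : (2 : ℝ) ^ m ≤ (fareySquareNear Q).card := by exact_mod_cast hcard
  exact (rpow_log_two_div_le_two_pow (by positivity) hc hlogQ).trans hcardR
end

section
/- For any positive integer Q that is a product of m ≥ 1 distinct odd primes, there exist at least 2^m pairs (a, q) of positive integers with Q < q ≤ 2Q, gcd(a, q) = 1, and |a q⁻² − Q⁻¹| ≤ Q⁻³ (as real numbers). -/
/-! Let `Q = q₁ ⋯ qₘ`. By the Chinese remainder theorem each choice of signs `(±1, …, ±1)` modulo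
the `qᵢ` gives a square root `x` of `1` modulo `Q`, and these `2 ^ m` roots are distinct because
`1 ≢ -1` modulo an odd prime. The lift `n ∈ (Q, 2Q]` of `x` satisfies `n² = a Q + 1` for some
`a ≥ 1`, which forces `gcd(a, n) = 1` and `a / n² - 1 / Q = -1 / (Q n²)`, of size at most `1 / Q³`. -/

open Finset

theorem ZMod.exists_injective_sq_eq_one {ι : Type*} [Fintype ι] (q : ι → ℕ)
    (hco : Pairwise (Function.onFun Nat.Coprime q)) (hq : ∀ i, 2 < q i) :
    ∃ x : (ι → Bool) → ZMod (∏ i, q i), Function.Injective x ∧ ∀ ε, x ε ^ 2 = 1 := by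
  let e := ZMod.prodEquivPi q hco
  let sign : (ι → Bool) → ∀ i, ZMod (q i) := fun ε i => if ε i then 1 else -1
  refine ⟨fun ε => e.symm (sign ε), e.symm.injective.comp fun ε ε' h => ?_, fun ε => ?_⟩
  · funext i
    have : Fact (2 < q i) := ⟨hq i⟩
    have hi := congrFun h i
    by_cases h₁ : ε i <;> by_cases h₂ : ε' i <;>
      simp_all [sign, ZMod.neg_one_ne_one, ZMod.neg_one_ne_one.symm]
  · apply e.injective
    funext i
    by_cases h : ε i <;> simp [sign, h]

theorem Nat.Coprime.of_mul_add_one_eq_sq {a Q n : ℕ} (h : a * Q + 1 = n ^ 2) : a.Coprime n := by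
  rw [← Nat.coprime_pow_right_iff two_pos, ← h, mul_comm, Nat.coprime_mul_right_add_right]
  exact Nat.coprime_one_right a

theorem abs_mul_inv_sq_sub_inv_le {a Q n : ℝ} (hQ : 0 < Q) (hQn : Q ≤ n) (h : a * Q + 1 = n ^ 2) :
    |a * (n ^ 2)⁻¹ - Q⁻¹| ≤ (Q ^ 3)⁻¹ := by
  have hn : 0 < n := hQ.trans_le hQn
  have hval : a * (n ^ 2)⁻¹ - Q⁻¹ = -(Q * n ^ 2)⁻¹ := by
    field_simp
    linear_combination h
  rw [hval, abs_neg, abs_of_pos (by positivity)]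
  gcongr
  calc Q ^ 3 = Q * Q ^ 2 := by ring
    _ ≤ Q * n ^ 2 := by gcongr

def closePair (Q : ℕ) (x : ZMod Q) : ℕ × ℕ :=
  (((x.val + Q) ^ 2 - 1) / Q, x.val + Q)

theorem closePair_injective (Q : ℕ) [NeZero Q] : Function.Injective (closePair Q) :=
  fun x y h => ZMod.val_injective Q (by simpa [closePair] using congrArg Prod.snd h)

theorem closePair_fst_mul_add_one {Q : ℕ} [NeZero Q] {x : ZMod Q} (hx : x ^ 2 = 1) :
    (closePair Q x).1 * Q + 1 = (closePair Q x).2 ^ 2 := by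
  change ((x.val + Q) ^ 2 - 1) / Q * Q + 1 = (x.val + Q) ^ 2
  have hcast : (((x.val + Q) ^ 2 : ℕ) : ZMod Q) = ((1 : ℕ) : ZMod Q) := by simp [hx]
  have hn : 1 ≤ (x.val + Q) ^ 2 := Nat.one_le_pow _ _ (by have := NeZero.pos Q; omega)
  have hdvd : Q ∣ (x.val + Q) ^ 2 - 1 :=
    (Nat.modEq_iff_dvd' hn).mp ((ZMod.natCast_eq_natCast_iff _ _ _).mp hcast).symm
  rw [Nat.div_mul_cancel hdvd]
  omega

theorem closePair_spec {Q : ℕ} (hQ : 1 < Q) {x : ZMod Q} (hx : x ^ 2 = 1) :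
    let p := closePair Q x
    0 < p.1 ∧ 0 < p.2 ∧ Q < p.2 ∧ p.2 ≤ 2 * Q ∧ Nat.gcd p.1 p.2 = 1 ∧
      |(p.1 : ℝ) * ((p.2 : ℝ) ^ 2)⁻¹ - ((Q : ℝ))⁻¹| ≤ ((Q : ℝ) ^ 3)⁻¹ := by
  have : NeZero Q := ⟨by omega⟩
  have : Fact (1 < Q) := ⟨hQ⟩
  have h := closePair_fst_mul_add_one hx
  have hx0 : 0 < x.val := ZMod.val_pos.mpr fun h0 => by simp [h0] at hx
  have hQn : Q < (closePair Q x).2 := by simp only [closePair]; omega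
  have hn2Q : (closePair Q x).2 ≤ 2 * Q := by simp only [closePair]; have := ZMod.val_lt x; omega
  have ha : 0 < (closePair Q x).1 := by
    by_contra! ha0
    rw [Nat.le_zero.mp ha0] at h
    nlinarith
  refine ⟨ha, by omega, hQn, hn2Q, Nat.Coprime.of_mul_add_one_eq_sq h, ?_⟩
  exact abs_mul_inv_sq_sub_inv_le (by positivity) (by exact_mod_cast hQn.le) (by exact_mod_cast h)

theorem many_close_pairs (m : ℕ) (hm : 1 ≤ m) (q : Fin m → ℕ)
    (hinj : Function.Injective q) (hprime : ∀ i, (q i).Prime) (hodd : ∀ i, q i ≠ 2)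
    (Q : ℕ) (hQ : Q = ∏ i, q i) :
    ∃ S : Finset (ℕ × ℕ), 2 ^ m ≤ S.card ∧
      ∀ p ∈ S, 0 < p.1 ∧ 0 < p.2 ∧ Q < p.2 ∧ p.2 ≤ 2 * Q ∧ Nat.gcd p.1 p.2 = 1 ∧
        |(p.1 : ℝ) * ((p.2 : ℝ) ^ 2)⁻¹ - ((Q : ℝ))⁻¹| ≤ ((Q : ℝ) ^ 3)⁻¹ := by
  subst hQ
  have hq : ∀ i, 2 < q i := fun i => (hprime i).two_le.lt_of_ne' (hodd i)
  have hco : Pairwise (Function.onFun Nat.Coprime q) := fun i j hij =>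
    (Nat.coprime_primes (hprime i) (hprime j)).mpr (hinj.ne hij)
  have hQ : 1 < ∏ i, q i := calc
    1 < q ⟨0, hm⟩ := (hprime _).one_lt
    _ ≤ ∏ i, q i := single_le_prod' (fun i _ => (hprime i).one_lt.le) (mem_univ _)
  have : NeZero (∏ i, q i) := ⟨by omega⟩
  obtain ⟨x, hx_inj, hx_sq⟩ := ZMod.exists_injective_sq_eq_one q hco hq
  refine ⟨univ.image (closePair _ ∘ x), ?_, ?_⟩
  · rw [card_image_of_injective _ ((closePair_injective _).comp hx_inj)]
    simp
  · simp only [mem_image, mem_univ, true_and]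
    rintro _ ⟨ε, rfl⟩
    exact closePair_spec hQ (hx_sq ε)
end
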